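/- arXiv:1308.3847 — 4 statements merged into one kernel-verified Lean document; each statement's English description precedes it below -/
import Mathlib

section
/- Let F_{p,∞} be the set of binary floating-point numbers with p significant bits and unbounded exponent. Let z ∈ F_{p,∞} with 0 < z < +∞, write z = 1.b₂⋯b_i 0⋯0 × 2^{e_z} with b_i = 1 and k = p − i trailing zeros, and set α = 1.1⋯1 (p ones) × 2^{e_z + k} and β = α ⊕ z (addition with round-to-nearest-even). Then for all x, y ∈ F_{p,∞}, if z = x ⊖ y (floating-point subtraction with round-to-nearest-even) then x ≤ β and y ≤ α; moreover β ⊖ α = β − α = z exactly. -/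
open scoped Classical

/-- Finite binary floating-point numbers with precision `p` and exponent range
`[emin, emax]` (subnormals included), viewed as real numbers. -/
def FF (p : ℕ) (emin emax : ℤ) : Set ℝ :=
  {x | ∃ m e : ℤ, |m| < 2 ^ p ∧ emin ≤ e ∧ e ≤ emax ∧
        x = (m : ℝ) * (2 : ℝ) ^ (e + 1 - (p : ℤ))}

/-- Binary floating-point numbers with precision `p` and unbounded exponent. -/
def FInf (p : ℕ) : Set ℝ :=
  {x | ∃ m e : ℤ, |m| < 2 ^ p ∧ x = (m : ℝ) * (2 : ℝ) ^ e}

/-- `z` has an even least-significant significand bit (canonical representation),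
format with bounded exponents. -/
def evenFF (p : ℕ) (emin emax : ℤ) (z : ℝ) : Prop :=
  ∃ m e : ℤ, |m| < 2 ^ p ∧ emin ≤ e ∧ e ≤ emax ∧
    z = (m : ℝ) * (2 : ℝ) ^ (e + 1 - (p : ℤ)) ∧ 2 ∣ m ∧
    ((2 : ℤ) ^ (p - 1) ≤ |m| ∨ e = emin)

/-- `z` has an odd least-significant significand bit (canonical representation). -/
def oddFF (p : ℕ) (emin emax : ℤ) (z : ℝ) : Prop :=
  ∃ m e : ℤ, |m| < 2 ^ p ∧ emin ≤ e ∧ e ≤ emax ∧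
    z = (m : ℝ) * (2 : ℝ) ^ (e + 1 - (p : ℤ)) ∧ ¬ 2 ∣ m ∧
    ((2 : ℤ) ^ (p - 1) ≤ |m| ∨ e = emin)

/-- Evenness of the significand for the unbounded-exponent format. -/
def evenInf (p : ℕ) (z : ℝ) : Prop :=
  ∃ m e : ℤ, z = (m : ℝ) * (2 : ℝ) ^ e ∧ 2 ∣ m ∧
    (((2 : ℤ) ^ (p - 1) ≤ |m| ∧ |m| < 2 ^ p) ∨ m = 0)

/-- `rnd` is round-to-nearest with ties-to-even onto the set `F` of representable
numbers, `even` being the evenness predicate used to break ties. -/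
def IsRNE (F : Set ℝ) (even : ℝ → Prop) (rnd : ℝ → ℝ) : Prop :=
  ∀ x : ℝ, rnd x ∈ F ∧ (∀ y ∈ F, |x - rnd x| ≤ |x - y|) ∧
    (∀ y ∈ F, y ≠ rnd x → |x - rnd x| = |x - y| → even (rnd x))

/-- The successor of `x` in the set `F`. -/
noncomputable def succF (F : Set ℝ) (x : ℝ) : ℝ := sInf {y | y ∈ F ∧ x < y}

/-- The predecessor of `x` in the set `F`. -/
noncomputable def predF (F : Set ℝ) (x : ℝ) : ℝ := sSup {y | y ∈ F ∧ y < x}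

/-- The largest finite float, `f_max = (2 - 2^(1-p)) * 2^emax`. -/
noncomputable def fmax (p : ℕ) (emax : ℤ) : ℝ :=
  (2 - (2 : ℝ) ^ (1 - (p : ℤ))) * (2 : ℝ) ^ emax

/-- The smallest positive (subnormal) float, `f_min = 2^(emin+1-p)`. -/
noncomputable def fminF (p : ℕ) (emin : ℤ) : ℝ := (2 : ℝ) ^ (emin + 1 - (p : ℤ))

/- Write `z = (2a+1)·2^c` and `α = (2^p - 1)·2^c`. Then `α + z = (2^(p-1) + a)·2^(c+1)` is a
float, so `β = α + z` exactly, and every float above `α` is a multiple of `2^(c+1)`. Since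
`z ± 2^c` are floats, `x ⊖ y = z` forces `|x - y - z| ≤ 2^(c-1)`. If `y > α`, then `x - y` is a
multiple of `2^(c+1)`, at distance at least `2^c` from the odd multiple `z` of `2^c`; if `x > β`,
then `x ≥ β + 2^(c+1)` and `x - y - z ≥ 2^(c+1)`. -/

namespace IsRNE

variable {F : Set ℝ} {even : ℝ → Prop} {rnd : ℝ → ℝ}

theorem apply_eq_self (hrnd : IsRNE F even rnd) {x : ℝ} (hx : x ∈ F) : rnd x = x := by
  have h := (hrnd x).2.1 x hx
  rw [sub_self, abs_zero] at h
  exact (sub_eq_zero.mp (abs_nonpos_iff.mp h)).symm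

theorem abs_sub_le_half (hrnd : IsRNE F even rnd) {t z u : ℝ} (hu : 0 < u) (ht : rnd t = z)
    (hzu : z + u ∈ F) (hzu' : z - u ∈ F) : |t - z| ≤ u / 2 := by
  have h₁ := sq_le_sq.mpr (ht ▸ (hrnd t).2.1 _ hzu)
  have h₂ := sq_le_sq.mpr (ht ▸ (hrnd t).2.1 _ hzu')
  rw [abs_le]
  constructor <;> nlinarith

end IsRNE

theorem FInf.exists_eq_int_mul_zpow_succ {p : ℕ} {y : ℝ} (hy : y ∈ FInf p) {c : ℤ}
    (h : ((2 : ℝ) ^ p - 1) * 2 ^ c < y) : ∃ n : ℤ, y = n * 2 ^ (c + 1) := by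
  obtain ⟨m, e, hm, rfl⟩ := hy
  have hce : c < e := by
    by_contra! hec
    have hm' : (m : ℝ) ≤ 2 ^ p - 1 := by
      have := (abs_lt.mp hm).2
      exact_mod_cast (by omega : m ≤ 2 ^ p - 1)
    have h2p : (0 : ℝ) ≤ 2 ^ p - 1 := by linarith [one_le_pow₀ (M₀ := ℝ) (n := p) one_le_two]
    have : (m : ℝ) * 2 ^ e ≤ (2 ^ p - 1) * 2 ^ c := by
      gcongr
      exact one_le_two
    linarith
  obtain ⟨j, rfl⟩ : ∃ j : ℕ, e = c + 1 + j := ⟨(e - (c + 1)).toNat, by omega⟩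
  refine ⟨m * 2 ^ j, ?_⟩
  rw [zpow_add₀ two_ne_zero, zpow_natCast]
  push_cast
  ring

theorem zpow_le_abs_int_mul_zpow_succ_sub (n a c : ℤ) :
    (2 : ℝ) ^ c ≤ |(n : ℝ) * 2 ^ (c + 1) - (2 * a + 1) * 2 ^ c| := by
  have hodd : (1 : ℝ) ≤ |2 * ((n : ℝ) - a) - 1| := by
    exact_mod_cast Int.one_le_abs (by omega : 2 * (n - a) - 1 ≠ 0)
  rw [show (n : ℝ) * 2 ^ (c + 1) - (2 * a + 1) * 2 ^ c = (2 * (n - a) - 1) * 2 ^ c by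
      rw [zpow_add_one₀ two_ne_zero]; ring,
    abs_mul, abs_of_pos (zpow_pos (two_pos : (0 : ℝ) < 2) c)]
  exact le_mul_of_one_le_left (zpow_pos two_pos c).le hodd

section MarreMichel

variable {p : ℕ} {rnd : ℝ → ℝ} {a c : ℤ}

theorem add_odd_mul_zpow_eq (hp : p ≠ 0) :
    ((2 : ℝ) ^ p - 1) * 2 ^ c + (2 * a + 1) * 2 ^ c = (2 ^ (p - 1) + a) * 2 ^ (c + 1) := by
  obtain ⟨q, rfl⟩ := Nat.exists_eq_succ_of_ne_zero hp
  rw [zpow_add_one₀ two_ne_zero, Nat.succ_sub_one, pow_succ]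
  ring

theorem add_odd_mul_zpow_mem_FInf (hp : p ≠ 0) (ha : 0 ≤ a) (hap : 2 * a + 1 < 2 ^ p) :
    ((2 : ℝ) ^ p - 1) * 2 ^ c + (2 * a + 1) * 2 ^ c ∈ FInf p := by
  refine ⟨2 ^ (p - 1) + a, c + 1, ?_, by rw [add_odd_mul_zpow_eq hp]; push_cast; ring⟩
  have h2p : (2 : ℤ) ^ p = 2 * 2 ^ (p - 1) := by
    rw [← pow_succ', Nat.sub_add_cancel (Nat.one_le_iff_ne_zero.mpr hp)]
  rw [abs_of_nonneg (by positivity)]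
  omega

theorem IsRNE.abs_sub_odd_mul_zpow_le (hrnd : IsRNE (FInf p) (evenInf p) rnd) (ha : 0 ≤ a)
    (hap : 2 * a + 1 < 2 ^ p) {t : ℝ} (ht : rnd t = (2 * a + 1) * 2 ^ c) :
    |t - (2 * a + 1) * 2 ^ c| ≤ 2 ^ c / 2 := by
  refine hrnd.abs_sub_le_half (zpow_pos two_pos c) ht ⟨a + 1, c + 1, ?_, ?_⟩ ⟨a, c + 1, ?_, ?_⟩
  · rw [abs_of_nonneg (by omega)]; omega
  · rw [zpow_add_one₀ two_ne_zero]; push_cast; ring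
  · rw [abs_of_nonneg ha]; omega
  · rw [zpow_add_one₀ two_ne_zero]; ring

theorem IsRNE.le_of_apply_sub_eq_odd_mul_zpow (hrnd : IsRNE (FInf p) (evenInf p) rnd)
    (ha : 0 ≤ a) (hap : 2 * a + 1 < 2 ^ p) {x y : ℝ} (hx : x ∈ FInf p) (hy : y ∈ FInf p)
    (hxy : rnd (x - y) = (2 * a + 1) * 2 ^ c) : y ≤ (2 ^ p - 1) * 2 ^ c := by
  by_contra! hαy
  have hclose := hrnd.abs_sub_odd_mul_zpow_le ha hap hxy
  have hc : (0 : ℝ) < 2 ^ c := zpow_pos two_pos c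
  have hz : (2 : ℝ) ^ c ≤ (2 * a + 1) * 2 ^ c :=
    le_mul_of_one_le_left hc.le (by exact_mod_cast (by omega : (1 : ℤ) ≤ 2 * a + 1))
  have hαx : ((2 : ℝ) ^ p - 1) * 2 ^ c < x := by linarith [(abs_le.mp hclose).1]
  obtain ⟨nx, rfl⟩ := FInf.exists_eq_int_mul_zpow_succ hx hαx
  obtain ⟨ny, rfl⟩ := FInf.exists_eq_int_mul_zpow_succ hy hαy
  have hfar := zpow_le_abs_int_mul_zpow_succ_sub (nx - ny) a c
  push_cast at hfar
  rw [sub_mul] at hfar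
  linarith

theorem IsRNE.le_add_of_apply_sub_eq_odd_mul_zpow (hrnd : IsRNE (FInf p) (evenInf p) rnd)
    (hp : p ≠ 0) (ha : 0 ≤ a) (hap : 2 * a + 1 < 2 ^ p) {x y : ℝ} (hx : x ∈ FInf p)
    (hy : y ≤ (2 ^ p - 1) * 2 ^ c) (hxy : rnd (x - y) = (2 * a + 1) * 2 ^ c) :
    x ≤ (2 ^ p - 1) * 2 ^ c + (2 * a + 1) * 2 ^ c := by
  by_contra! hβx
  have hclose := hrnd.abs_sub_odd_mul_zpow_le ha hap hxy
  have hz : (0 : ℝ) < (2 * a + 1) * 2 ^ c :=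
    mul_pos (by exact_mod_cast (by omega : (0 : ℤ) < 2 * a + 1)) (zpow_pos two_pos c)
  obtain ⟨n, rfl⟩ := FInf.exists_eq_int_mul_zpow_succ hx (by linarith)
  have hsum := add_odd_mul_zpow_eq hp (a := a) (c := c)
  have hn : (2 : ℤ) ^ (p - 1) + a + 1 ≤ n := by
    have h := lt_of_mul_lt_mul_right (hsum ▸ hβx) (zpow_pos (two_pos : (0 : ℝ) < 2) (c + 1)).le
    have h' : (2 : ℤ) ^ (p - 1) + a < n := by exact_mod_cast h
    omega
  have hx : (((2 : ℤ) ^ (p - 1) + a + 1 : ℤ) : ℝ) * 2 ^ (c + 1) ≤ n * 2 ^ (c + 1) := by gcongr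
  push_cast at hx
  linarith [(abs_le.mp hclose).2, zpow_add_one₀ (two_ne_zero : (2 : ℝ) ≠ 0) c]

end MarreMichel

theorem marre_michel_unbounded_general (p : ℕ) (hp : 2 ≤ p) (rnd : ℝ → ℝ)
    (hrnd : IsRNE (FInf p) (evenInf p) rnd)
    (z α β : ℝ) (ez : ℤ) (k : ℕ) (a : ℤ)
    (hub : (2 * a + 1) * 2 ^ k < (2 : ℤ) ^ p)
    (hz : z = (((2 * a + 1) * 2 ^ k : ℤ) : ℝ) * (2 : ℝ) ^ (ez + 1 - (p : ℤ)))
    (hzpos : 0 < z)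
    (halpha : α = (((2 : ℤ) ^ p - 1 : ℤ) : ℝ) * (2 : ℝ) ^ (ez + (k : ℤ) + 1 - (p : ℤ)))
    (hbeta : β = rnd (α + z)) :
    (∀ x ∈ FInf p, ∀ y ∈ FInf p, rnd (x - y) = z → x ≤ β ∧ y ≤ α) ∧
      rnd (β - α) = z ∧ β - α = z := by
  obtain ⟨c, hzc, hαc⟩ : ∃ c : ℤ, z = (2 * a + 1) * 2 ^ c ∧ α = (2 ^ p - 1) * 2 ^ c := by
    refine ⟨ez + k + 1 - p, ?_, by rw [halpha]; push_cast; rfl⟩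
    rw [hz, show ez + (k : ℤ) + 1 - p = ez + 1 - p + k by ring, zpow_add₀ two_ne_zero,
      zpow_natCast]
    push_cast
    ring
  subst hzc hαc
  have ha : 0 ≤ a := by
    have h : 0 < 2 * a + 1 := by exact_mod_cast pos_of_mul_pos_left hzpos (zpow_pos two_pos c).le
    omega
  have hap : 2 * a + 1 < 2 ^ p :=
    (le_mul_of_one_le_right (by omega) (one_le_pow₀ one_le_two)).trans_lt hub
  have hβ : β = (2 ^ p - 1) * 2 ^ c + (2 * a + 1) * 2 ^ c :=
    hbeta.trans (hrnd.apply_eq_self (add_odd_mul_zpow_mem_FInf (by omega) ha hap))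
  have hβα : β - (2 ^ p - 1) * 2 ^ c = (2 * a + 1) * 2 ^ c := by
    rw [hβ]
    ring
  have hzmem : (2 * a + 1 : ℝ) * 2 ^ c ∈ FInf p :=
    ⟨2 * a + 1, c, by rwa [abs_of_nonneg (by omega)], by push_cast; rfl⟩
  refine ⟨fun x hx y hy hxy => ?_, by rw [hβα, hrnd.apply_eq_self hzmem], hβα⟩
  have hyα := hrnd.le_of_apply_sub_eq_odd_mul_zpow ha hap hx hy hxy
  exact ⟨hβ ▸ hrnd.le_add_of_apply_sub_eq_odd_mul_zpow (by omega) ha hap hx hyα hxy, hyα⟩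

/-- Marre-Michel property (Proposition 1): for `z ∈ F_{p,∞}` with `0 < z < +∞`,
`z = 1.b₂⋯b_i0⋯0 × 2^ez` (`b_i = 1`, `k = p - i` trailing zeros),
`α = 1.1⋯1 × 2^(ez+k)` and `β = α ⊕ z`, every `x, y` with `z = x ⊖ y` satisfy
`x ≤ β` and `y ≤ α`, and `β ⊖ α = β - α = z` exactly. -/
theorem marre_michel_unbounded (p : ℕ) (hp : 2 ≤ p) (rnd : ℝ → ℝ)
    (hrnd : IsRNE (FInf p) (evenInf p) rnd)
    (z α β : ℝ) (ez : ℤ) (k : ℕ) (a : ℤ)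
    (hk : k ≤ p - 1)
    (hlb : (2 : ℤ) ^ (p - 1) ≤ (2 * a + 1) * 2 ^ k)
    (hub : (2 * a + 1) * 2 ^ k < (2 : ℤ) ^ p)
    (hz : z = (((2 * a + 1) * 2 ^ k : ℤ) : ℝ) * (2 : ℝ) ^ (ez + 1 - (p : ℤ)))
    (hzpos : 0 < z)
    (halpha : α = (((2 : ℤ) ^ p - 1 : ℤ) : ℝ) * (2 : ℝ) ^ (ez + (k : ℤ) + 1 - (p : ℤ)))
    (hbeta : β = rnd (α + z)) :
    (∀ x ∈ FInf p, ∀ y ∈ FInf p, rnd (x - y) = z → x ≤ β ∧ y ≤ α) ∧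
      rnd (β - α) = z ∧ β - α = z :=
  marre_michel_unbounded_general p hp rnd hrnd z α β ez k a hub hz hzpos halpha hbeta
end

section
/- Let z be a subnormal IEEE 754 number with 0 < z < f_min^nor = 2^{e_min}, written z = 0.0⋯01 b_{j+1}⋯b_i 0⋯0 × 2^{e_min} with b_i = 1 and k = p − i trailing zeros. Set α = 1.1⋯1 (p ones) × 2^{e_min + k} and β = α ⊕ z. Then for all floats x, y (including subnormals), z = x ⊖ y implies x ≤ β and y ≤ α, and β ⊖ α = β − α = z exactly. -/
open scoped Classical

/-!
Let `u = 2 ^ (emin + 1 - p)` be the spacing of the subnormals and `z = (2a+1)·2^k·u`. Since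
`z ± u` are floats, `x ⊖ y = z` forces `|x - y - z| ≤ u / 2`. The float `α` is the largest one
below `2 ^ (emin + k + 1)`, and from there on all floats are multiples of `2^(k+1)·u`. If `y > α`,
then `y` and `x > y` are both such multiples, so `x - y` cannot come within `u / 2` of the odd
multiple `z` of `2^k·u`; hence `y ≤ α`. Further `β = α + z ≥ 2 ^ (emin + k + 1)` exactly, so
`x > β` would give `x ≥ β + 2^(k+1)·u` and `x - y ≥ z + 2^(k+1)·u`, again too far from `z`.
-/

theorem two_zpow_add_natCast (e : ℤ) (n : ℕ) : (2 : ℝ) ^ (e + n) = 2 ^ n * 2 ^ e := by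
  rw [zpow_add₀ two_ne_zero, zpow_natCast, mul_comm]

theorem IsRNE.eq_self_of_mem {F : Set ℝ} {even : ℝ → Prop} {rnd : ℝ → ℝ}
    (h : IsRNE F even rnd) {x : ℝ} (hx : x ∈ F) : rnd x = x := by
  have := (h x).2.1 x hx
  rw [sub_self, abs_zero, abs_nonpos_iff, sub_eq_zero] at this
  exact this.symm

theorem IsRNE.abs_sub_le_half_s1 {F : Set ℝ} {even : ℝ → Prop} {rnd : ℝ → ℝ}
    (h : IsRNE F even rnd) {t z u : ℝ} (ht : rnd t = z) (hsub : z - u ∈ F) (hadd : z + u ∈ F)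
    (hu : 0 < u) :
    |t - z| ≤ u / 2 := by
  have h₁ := (h t).2.1 _ hsub
  have h₂ := (h t).2.1 _ hadd
  rw [ht, ← sq_le_sq] at h₁ h₂
  rw [abs_le]
  constructor <;> nlinarith

section FF

variable {p : ℕ} {emin emax : ℤ}

theorem FF.exists_eq_int_mul_of_zpow_le_abs {w : ℝ} (hw : w ∈ FF p emin emax) {E : ℤ}
    (hE : (2 : ℝ) ^ E ≤ |w|) : ∃ M : ℤ, w = M * (2 : ℝ) ^ (E + 1 - p) := by
  obtain ⟨m, e, hm, -, -, rfl⟩ := hw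
  have hlt : (2 : ℝ) ^ E < 2 ^ (e + 1) :=
    calc (2 : ℝ) ^ E ≤ |m * (2 : ℝ) ^ (e + 1 - p)| := hE
      _ = |(m : ℝ)| * 2 ^ (e + 1 - p) := by
          rw [abs_mul, abs_of_pos (zpow_pos (two_pos : (0 : ℝ) < 2) _)]
      _ < 2 ^ (p : ℤ) * 2 ^ (e + 1 - p) := by gcongr; exact_mod_cast hm
      _ = 2 ^ (e + 1) := by rw [← zpow_add₀ two_ne_zero]; ring_nf
  have hEe : E ≤ e := by
    have := (zpow_lt_zpow_iff_right₀ one_lt_two).1 hlt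
    omega
  obtain ⟨n, hn⟩ := Int.eq_ofNat_of_zero_le (sub_nonneg.2 hEe)
  refine ⟨m * 2 ^ n, ?_⟩
  push_cast
  rw [mul_assoc, ← zpow_natCast, ← zpow_add₀ two_ne_zero]
  congr 2
  omega

theorem FF.add_zpow_le_of_lt {x b : ℝ} (hx : x ∈ FF p emin emax) {E N : ℤ}
    (hE : (2 : ℝ) ^ E ≤ x) (hb : b = N * (2 : ℝ) ^ (E + 1 - p)) (hbx : b < x) :
    b + (2 : ℝ) ^ (E + 1 - p) ≤ x := by
  obtain ⟨M, rfl⟩ := FF.exists_eq_int_mul_of_zpow_le_abs hx (hE.trans (le_abs_self x))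
  subst hb
  have hNM : N + 1 ≤ M := by
    have : (N : ℝ) < M := lt_of_mul_lt_mul_right hbx (by positivity)
    exact_mod_cast this
  calc (N : ℝ) * 2 ^ (E + 1 - p) + 2 ^ (E + 1 - p) = ((N + 1 : ℤ) : ℝ) * 2 ^ (E + 1 - p) := by
        push_cast; ring
    _ ≤ M * 2 ^ (E + 1 - p) := by gcongr

end FF

theorem Int.one_le_abs_mul_two_pow_succ_sub_odd_mul (N a : ℤ) (k : ℕ) :
    1 ≤ |N * 2 ^ (k + 1) - (2 * a + 1) * 2 ^ k| := by
  refine Int.one_le_abs ?_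
  rw [show N * 2 ^ (k + 1) - (2 * a + 1) * 2 ^ k = 2 ^ k * (2 * N - 2 * a - 1) by ring]
  exact mul_ne_zero (pow_ne_zero _ two_ne_zero) (by omega)

section MarreMichel

variable {p : ℕ} {emin emax : ℤ} {k : ℕ} {a : ℤ} {x y z α : ℝ}

theorem two_zpow_le_intCast_two_pow_sub_one_mul (hp : 1 ≤ p) (E : ℤ) :
    (2 : ℝ) ^ E ≤ (((2 : ℤ) ^ p - 1 : ℤ) : ℝ) * 2 ^ (E + 1 - p) := by
  have hsig : (2 : ℤ) ^ (p - 1) ≤ 2 ^ p - 1 := by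
    have h2p : (2 : ℤ) ^ p = 2 * 2 ^ (p - 1) := by rw [← pow_succ', Nat.sub_add_cancel hp]
    have := pow_pos (two_pos : (0 : ℤ) < 2) (p - 1)
    omega
  calc (2 : ℝ) ^ E = 2 ^ (E + 1 - p + (p - 1 : ℕ)) := by rw [Nat.cast_sub hp]; ring_nf
    _ = 2 ^ (p - 1) * 2 ^ (E + 1 - p) := two_zpow_add_natCast _ _
    _ ≤ _ := by gcongr; exact_mod_cast hsig

theorem intCast_two_pow_sub_one_mul_add_zpow (E : ℤ) :
    (((2 : ℤ) ^ p - 1 : ℤ) : ℝ) * 2 ^ (E + 1 - p) + 2 ^ (E + 1 - p) = 2 ^ (E + 1) := by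
  rw [show E + 1 = E + 1 - p + p by ring, two_zpow_add_natCast]
  push_cast
  ring_nf

/-- `α + z` has the significand `2 ^ (p - 1) + a` at exponent `emin + k + 1`, which is what makes
`β = α ⊕ z` exact. -/
theorem alpha_add_z_eq (hp : 1 ≤ p) :
    (((2 : ℤ) ^ p - 1 : ℤ) : ℝ) * 2 ^ (emin + k + 1 - p)
        + (((2 * a + 1) * 2 ^ k : ℤ) : ℝ) * 2 ^ (emin + 1 - p)
      = (((2 : ℤ) ^ (p - 1) + a : ℤ) : ℝ) * 2 ^ (emin + k + 1 + 1 - p) := by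
  rw [show emin + k + 1 - p = emin + 1 - p + k by ring,
    show emin + k + 1 + 1 - p = emin + 1 - p + (k + 1 : ℕ) by push_cast; ring,
    two_zpow_add_natCast, two_zpow_add_natCast, show p = p - 1 + 1 by omega]
  push_cast
  ring

theorem alpha_add_z_mem (hp : 1 ≤ p) (hrange : emin + k + 1 ≤ emax)
    (hm : 0 < (2 * a + 1) * 2 ^ k) (hub : (2 * a + 1) * 2 ^ k < (2 : ℤ) ^ (p - 1)) :
    (((2 : ℤ) ^ p - 1 : ℤ) : ℝ) * 2 ^ (emin + k + 1 - p)
        + (((2 * a + 1) * 2 ^ k : ℤ) : ℝ) * 2 ^ (emin + 1 - p) ∈ FF p emin emax := by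
  have h2p : (2 : ℤ) ^ p = 2 * 2 ^ (p - 1) := by rw [← pow_succ', Nat.sub_add_cancel hp]
  have ha : 0 ≤ a := by
    have := pos_of_mul_pos_left hm (by positivity)
    omega
  have ha' : 2 * a + 1 ≤ (2 * a + 1) * 2 ^ k :=
    le_mul_of_one_le_right (by omega) (one_le_pow₀ one_le_two)
  rw [alpha_add_z_eq hp]
  exact ⟨_, emin + k + 1, by rw [abs_of_nonneg (by positivity)]; omega, by omega, hrange, rfl⟩

theorem le_alpha_of_abs_sub_sub_le (hp : 1 ≤ p) (hx : x ∈ FF p emin emax)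
    (hy : y ∈ FF p emin emax)
    (hm : 0 < (2 * a + 1) * 2 ^ k)
    (hz : z = (((2 * a + 1) * 2 ^ k : ℤ) : ℝ) * 2 ^ (emin + 1 - p))
    (halpha : α = (((2 : ℤ) ^ p - 1 : ℤ) : ℝ) * 2 ^ (emin + k + 1 - p))
    (hclose : |x - y - z| ≤ 2 ^ (emin + 1 - p) / 2) : y ≤ α := by
  set u : ℝ := 2 ^ (emin + 1 - p)
  have hu0 : 0 < u := by positivity
  by_contra! hαy
  have hy₁ : (2 : ℝ) ^ (emin + k + 1) ≤ y :=
    calc (2 : ℝ) ^ (emin + k + 1) = α + 2 ^ (emin + k + 1 - p) := by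
          rw [halpha, intCast_two_pow_sub_one_mul_add_zpow]
      _ ≤ y := FF.add_zpow_le_of_lt hy
          ((halpha ▸ two_zpow_le_intCast_two_pow_sub_one_mul hp _).trans hαy.le) halpha hαy
  have hyx : y < x := by
    have : u ≤ z := by
      rw [hz]; exact le_mul_of_one_le_left hu0.le (by exact_mod_cast hm)
    linarith [(abs_le.1 hclose).1]
  obtain ⟨Mx, rfl⟩ :=
    FF.exists_eq_int_mul_of_zpow_le_abs hx (hy₁.trans (hyx.le.trans (le_abs_self _)))
  obtain ⟨My, rfl⟩ := FF.exists_eq_int_mul_of_zpow_le_abs hy (hy₁.trans (le_abs_self _))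
  have hdiff : Mx * 2 ^ (emin + k + 1 + 1 - p) - My * 2 ^ (emin + k + 1 + 1 - p) - z =
      (((Mx - My) * 2 ^ (k + 1) - (2 * a + 1) * 2 ^ k : ℤ) : ℝ) * u := by
    rw [hz, show emin + k + 1 + 1 - p = emin + 1 - p + (k + 1 : ℕ) by push_cast; ring,
      two_zpow_add_natCast]
    push_cast; ring
  have hgap : (1 : ℝ) ≤ |(((Mx - My) * 2 ^ (k + 1) - (2 * a + 1) * 2 ^ k : ℤ) : ℝ)| := by
    exact_mod_cast Int.one_le_abs_mul_two_pow_succ_sub_odd_mul (Mx - My) a k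
  rw [hdiff, abs_mul, abs_of_pos hu0] at hclose
  nlinarith

theorem le_alpha_add_of_abs_sub_sub_le (hp : 1 ≤ p) (hx : x ∈ FF p emin emax)
    (hm : 0 < (2 * a + 1) * 2 ^ k)
    (hz : z = (((2 * a + 1) * 2 ^ k : ℤ) : ℝ) * 2 ^ (emin + 1 - p))
    (halpha : α = (((2 : ℤ) ^ p - 1 : ℤ) : ℝ) * 2 ^ (emin + k + 1 - p))
    (hyα : y ≤ α) (hclose : |x - y - z| ≤ 2 ^ (emin + 1 - p) / 2) : x ≤ α + z := by
  set u : ℝ := 2 ^ (emin + 1 - p)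
  have hu0 : 0 < u := by positivity
  have hsum : α + z = (((2 : ℤ) ^ (p - 1) + a : ℤ) : ℝ) * 2 ^ (emin + k + 1 + 1 - p) := by
    rw [halpha, hz, alpha_add_z_eq hp]
  have hulp : (2 : ℝ) ^ (emin + k + 1 - p) ≤ z := by
    have h2a : (1 : ℝ) ≤ 2 * a + 1 := by
      have : 0 < 2 * a + 1 := pos_of_mul_pos_left hm (by positivity)
      exact_mod_cast this
    rw [hz, show emin + k + 1 - p = emin + 1 - p + k by ring, two_zpow_add_natCast]
    push_cast
    nlinarith [show (0 : ℝ) < 2 ^ k * u by positivity]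
  by_contra! hxβ
  have hβ : (2 : ℝ) ^ (emin + k + 1) ≤ α + z := by
    rw [← intCast_two_pow_sub_one_mul_add_zpow, ← halpha]
    linarith
  have hx₁ := FF.add_zpow_le_of_lt hx (hβ.trans hxβ.le) hsum hxβ
  have hstep : u ≤ 2 ^ (emin + k + 1 + 1 - p) := by
    rw [show emin + k + 1 + 1 - p = emin + 1 - p + (k + 1 : ℕ) by push_cast; ring,
      two_zpow_add_natCast]
    exact le_mul_of_one_le_left hu0.le (one_le_pow₀ one_le_two)
  linarith [(abs_le.1 hclose).2]

end MarreMichel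

theorem marre_michel_subnormal_general (p : ℕ) (hp : 2 ≤ p) (emin emax : ℤ)
    (rnd : ℝ → ℝ)
    (hrnd : IsRNE (FF p emin emax) (evenFF p emin emax) rnd)
    (z α β : ℝ) (k : ℕ) (a : ℤ)
    (hrange : emin + (k : ℤ) + 1 ≤ emax)
    (hlb : 0 < (2 * a + 1) * 2 ^ k)
    (hub : (2 * a + 1) * 2 ^ k < (2 : ℤ) ^ (p - 1))
    (hz : z = (((2 * a + 1) * 2 ^ k : ℤ) : ℝ) * (2 : ℝ) ^ (emin + 1 - (p : ℤ)))
    (halpha : α = (((2 : ℤ) ^ p - 1 : ℤ) : ℝ) * (2 : ℝ) ^ (emin + (k : ℤ) + 1 - (p : ℤ)))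
    (hbeta : β = rnd (α + z)) :
    (∀ x ∈ FF p emin emax, ∀ y ∈ FF p emin emax,
        rnd (x - y) = z → x ≤ β ∧ y ≤ α) ∧
      rnd (β - α) = z ∧ β - α = z := by
  have hp₁ : 1 ≤ p := one_le_two.trans hp
  have hpow : (2 : ℤ) ^ p = 2 * 2 ^ (p - 1) := by rw [← pow_succ', Nat.sub_add_cancel hp₁]
  have hsubnormal : ∀ n : ℤ, 0 ≤ n → n ≤ 2 ^ (p - 1) →
      (n : ℝ) * 2 ^ (emin + 1 - (p : ℤ)) ∈ FF p emin emax := fun n h₀ h₁ =>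
    ⟨n, emin, by rw [abs_of_nonneg h₀]; omega, le_rfl, by omega, rfl⟩
  have hzF : z ∈ FF p emin emax := hz ▸ hsubnormal _ hlb.le hub.le
  have hzsubF : z - 2 ^ (emin + 1 - (p : ℤ)) ∈ FF p emin emax := by
    convert hsubnormal ((2 * a + 1) * 2 ^ k - 1) (by omega) (by omega) using 1
    rw [hz]; push_cast; ring
  have hzaddF : z + 2 ^ (emin + 1 - (p : ℤ)) ∈ FF p emin emax := by
    convert hsubnormal ((2 * a + 1) * 2 ^ k + 1) (by omega) (by omega) using 1
    rw [hz]; push_cast; ring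
  have hsumF : α + z ∈ FF p emin emax := by
    rw [halpha, hz]; exact alpha_add_z_mem hp₁ hrange hlb hub
  have hβ : β = α + z := by rw [hbeta, hrnd.eq_self_of_mem hsumF]
  refine ⟨fun x hx y hy hxy => ?_, by rw [hβ, add_sub_cancel_left, hrnd.eq_self_of_mem hzF],
    by rw [hβ, add_sub_cancel_left]⟩
  have hclose := hrnd.abs_sub_le_half_s1 hxy hzsubF hzaddF (by positivity)
  have hyα := le_alpha_of_abs_sub_sub_le hp₁ hx hy hlb hz halpha hclose
  exact ⟨hβ ▸ le_alpha_add_of_abs_sub_sub_le hp₁ hx hlb hz halpha hyα hclose, hyα⟩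

/-- Marre-Michel property extended to subnormals: for a subnormal
`z = 0.0⋯01b_{j+1}⋯b_i0⋯0 × 2^emin` (`b_i = 1`, `k = p - i` trailing zeros),
with `α = 1.1⋯1 × 2^(emin+k)` and `β = α ⊕ z`, every `x, y` with `z = x ⊖ y`
satisfy `x ≤ β` and `y ≤ α`, and `β ⊖ α = β - α = z` exactly. -/
theorem marre_michel_subnormal (p : ℕ) (hp : 2 ≤ p) (emin emax : ℤ)
    (rnd : ℝ → ℝ)
    (hrnd : IsRNE (FF p emin emax) (evenFF p emin emax) rnd)
    (z α β : ℝ) (k : ℕ) (a : ℤ)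
    (hrange : emin + (k : ℤ) + 1 ≤ emax)
    (hlb : 0 < (2 * a + 1) * 2 ^ k)
    (hub : (2 * a + 1) * 2 ^ k < (2 : ℤ) ^ (p - 1))
    (hz : z = (((2 * a + 1) * 2 ^ k : ℤ) : ℝ) * (2 : ℝ) ^ (emin + 1 - (p : ℤ)))
    (hzpos : 0 < z) (hzsub : z < (2 : ℝ) ^ emin)
    (halpha : α = (((2 : ℤ) ^ p - 1 : ℤ) : ℝ) * (2 : ℝ) ^ (emin + (k : ℤ) + 1 - (p : ℤ)))
    (hbeta : β = rnd (α + z)) :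
    (∀ x ∈ FF p emin emax, ∀ y ∈ FF p emin emax,
        rnd (x - y) = z → x ≤ β ∧ y ≤ α) ∧
      rnd (β - α) = z ∧ β - α = z :=
  marre_michel_subnormal_general p hp emin emax rnd hrnd z α β k a hrange hlb hub hz halpha hbeta
end

section
/- In IEEE 754 binary arithmetic with round-to-nearest ties-to-even, for every float z with |z| ≤ 1 (including subnormals and signed zeros), (z ⊗ f_max) ⊘ f_max = z, where f_max = (2 − 2^{1−p})·2^{e_max} is the largest finite float. -/
open scoped Classical

/-!
Round-to-nearest-even commutes with negation on this format, so it suffices to treat `z > 0`.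
Write `z = m * 2^(e+1-p)` canonically, `2^k ≤ m < 2^(k+1)`, and `u = 2^(e+emax+2-2p)`, so that
`z * f_max = m * 2^p * u - m * u` lies just below `m * 2^p * u`.

If `m = 2^k` and the product is not subnormal, it is itself a float and both roundings are exact.
If `2^k < m` and the product is not subnormal (`2^p < m * 2^(emax+2)`), its ulp is
`2^(k+1) * u > m * u`, so it rounds down to `r = (m * 2^p - 2^(k+1)) * u`; then `r / f_max` differs
from `z` by `(2^(k+1) - m) / (2^p - 1) * 2^(e+1-p)`, less than half an ulp of `z`.
Otherwise `z` is subnormal and the product has ulp `g = 2^(emin+1-p)`. When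
`m * 2^(emax+2) < 2^p`, `m * u < g / 2` and the product rounds up to `m * 2^p * u`, whose quotient
by `f_max` is off by `m / (2^p - 1) * g < g / 2`. When `m * 2^(emax+2) = 2^p`, the product is the
midpoint `2^emin - g / 2` of two subnormals and ties-to-even selects `2^emin`, whose quotient is
within `g / (2 * f_max) < g / 2` of `z`.
-/

section RoundToNearest

variable {F : Set ℝ} {even : ℝ → Prop} {rnd : ℝ → ℝ}

theorem IsRNE.eq_of_forall_lt (h : IsRNE F even rnd) {x v : ℝ} (hv : v ∈ F)
    (hlt : ∀ y ∈ F, y ≠ v → |x - v| < |x - y|) : rnd x = v := by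
  obtain ⟨hmem, hmin, -⟩ := h x
  by_contra hne
  exact (hlt _ hmem hne).not_ge (hmin v hv)

theorem IsRNE.eq_self (h : IsRNE F even rnd) {x : ℝ} (hx : x ∈ F) : rnd x = x :=
  h.eq_of_forall_lt hx fun y _ hne => by simpa [sub_eq_zero, eq_comm] using hne

theorem IsRNE.rnd_div_rnd_mul_of_mem (h : IsRNE F even rnd) {z f : ℝ} (hz : z ∈ F)
    (hzf : z * f ∈ F) (hf : f ≠ 0) : rnd (rnd (z * f) / f) = z := by
  rw [h.eq_self hzf, mul_div_cancel_right₀ _ hf, h.eq_self hz]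

theorem IsRNE.eq_of_tie (h : IsRNE F even rnd) {x v a : ℝ} (hv : v ∈ F) (ha : a ∈ F)
    (hav : a ≠ v) (htie : |x - a| = |x - v|) (ha_odd : ¬ even a)
    (hlt : ∀ y ∈ F, y ≠ a → y ≠ v → |x - v| < |x - y|) : rnd x = v := by
  obtain ⟨hmem, hmin, heven⟩ := h x
  by_contra hne
  by_cases hra : rnd x = a
  · subst hra
    exact ha_odd (heven v hv (Ne.symm hne) (le_antisymm (hmin v hv) (htie ▸ hmin _ ha)))
  · exact (hlt _ hmem hra hne).not_ge (hmin v hv)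

theorem IsRNE.neg (h : IsRNE F even rnd) (hF : ∀ y ∈ F, -y ∈ F)
    (heven : ∀ y, even y → even (-y)) : IsRNE F even (fun x => -rnd (-x)) := by
  intro x
  obtain ⟨hmem, hmin, htie⟩ := h (-x)
  have hdist : ∀ a b : ℝ, |-a - b| = |a - -b| := fun a b => by rw [← abs_neg]; ring_nf
  refine ⟨hF _ hmem, fun y hy => ?_, fun y hy hne hxy => ?_⟩
  · simpa only [hdist, neg_neg] using hmin (-y) (hF y hy)
  · refine heven _ (htie (-y) (hF y hy) (fun h => hne ?_) ?_)
    · simp [← h]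
    · simpa only [hdist, neg_neg] using hxy

end RoundToNearest

section Format

variable {p : ℕ} {emin emax : ℤ}

theorem neg_mem_FF {y : ℝ} (hy : y ∈ FF p emin emax) : -y ∈ FF p emin emax := by
  obtain ⟨m, e, hm, he, he', rfl⟩ := hy
  exact ⟨-m, e, by rwa [abs_neg], he, he', by push_cast; ring⟩

theorem evenFF_neg {y : ℝ} (hy : evenFF p emin emax y) : evenFF p emin emax (-y) := by
  obtain ⟨m, e, hm, he, he', rfl, heven, hcan⟩ := hy
  exact ⟨-m, e, by rwa [abs_neg], he, he', by push_cast; ring, by rwa [Int.dvd_neg],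
    by rwa [abs_neg]⟩

theorem exists_canonical_of_mem_FF {z : ℝ} (hz : z ∈ FF p emin emax) :
    ∃ m e : ℤ, |m| < 2 ^ p ∧ emin ≤ e ∧ e ≤ emax ∧ z = m * (2 : ℝ) ^ (e + 1 - (p : ℤ)) ∧
      ((2 : ℤ) ^ (p - 1) ≤ |m| ∨ e = emin) := by
  obtain ⟨e, ⟨m, hm, he, he', hz⟩, hmin⟩ := Int.exists_least_of_bdd
    (P := fun e => ∃ m : ℤ, |m| < 2 ^ p ∧ emin ≤ e ∧ e ≤ emax ∧ z = m * (2 : ℝ) ^ (e + 1 - (p : ℤ)))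
    ⟨emin, fun e ⟨_, _, he, _⟩ => he⟩
    (by obtain ⟨m, e, hm, he, he', hz⟩ := hz; exact ⟨e, m, hm, he, he', hz⟩)
  refine ⟨m, e, hm, he, he', hz, ?_⟩
  by_contra! hcan
  -- a significand too small for a normal float can be doubled at a lower exponent
  have hlower := hmin (e - 1) ⟨2 * m, ?_, by omega, by omega, ?_⟩
  · omega
  · rcases p with _ | p
    · simp_all
    · rw [pow_succ, abs_mul, abs_two]
      simp only [Nat.add_sub_cancel] at hcan
      omega
  · rw [hz, show e + 1 - (p : ℤ) = 1 + (e - 1 + 1 - p) by ring, zpow_add₀ two_ne_zero]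
    push_cast
    ring

theorem exists_eq_int_mul_or_abs_lt_of_mem_FF {y : ℝ} (hy : y ∈ FF p emin emax) (c : ℤ) :
    (∃ n : ℤ, y = n * (2 : ℝ) ^ (c + 1 - (p : ℤ))) ∨ (emin < c ∧ |y| < (2 : ℝ) ^ c) := by
  obtain ⟨m, e, hm, he, -, rfl⟩ := hy
  rcases le_or_gt c e with hce | hec
  · left
    lift e - c to ℕ using (by omega) with d hd
    refine ⟨m * 2 ^ d, ?_⟩
    rw [show e + 1 - (p : ℤ) = d + (c + 1 - p) by omega, zpow_add₀ two_ne_zero, zpow_natCast]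
    push_cast
    ring
  · right
    refine ⟨by omega, ?_⟩
    have hm' : |(m : ℝ)| < 2 ^ (p : ℤ) := by rw [zpow_natCast]; exact_mod_cast hm
    calc |(m : ℝ) * 2 ^ (e + 1 - (p : ℤ))| = |(m : ℝ)| * 2 ^ (e + 1 - (p : ℤ)) := by
          rw [abs_mul, abs_zpow, abs_two]
      _ < 2 ^ (p : ℤ) * 2 ^ (e + 1 - (p : ℤ)) := by gcongr
      _ = 2 ^ (e + 1) := by rw [← zpow_add₀ two_ne_zero]; ring_nf
      _ ≤ 2 ^ c := zpow_le_zpow_right₀ one_le_two (by omega)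

end Format

section Nearest

variable {p : ℕ} {emin emax : ℤ}

-- Floats of exponent at least `c` are multiples of `2^(c+1-p)`; `hbinade` keeps the smaller ones,
-- whose grid is finer, farther from `x`.
theorem abs_sub_lt_abs_sub_of_near {x : ℝ} {V c : ℤ}
    (hnear : 2 * |x - V * 2 ^ (c + 1 - (p : ℤ))| < 2 ^ (c + 1 - (p : ℤ)))
    (hbinade : c = emin ∨ 2 ^ c + |x - V * 2 ^ (c + 1 - (p : ℤ))| ≤ x) :
    ∀ y ∈ FF p emin emax, y ≠ V * 2 ^ (c + 1 - (p : ℤ)) →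
      |x - V * 2 ^ (c + 1 - (p : ℤ))| < |x - y| := by
  intro y hy hne
  rcases exists_eq_int_mul_or_abs_lt_of_mem_FF hy c with ⟨n, rfl⟩ | ⟨hc, hsmall⟩
  · set g : ℝ := 2 ^ (c + 1 - (p : ℤ))
    have hnV : (1 : ℝ) ≤ |(n : ℝ) - V| := by
      have : n ≠ V := by rintro rfl; exact hne rfl
      exact_mod_cast Int.one_le_abs (sub_ne_zero.mpr this)
    have hgap : g ≤ |n * g - V * g| := by
      rw [← sub_mul, abs_mul, abs_of_pos (by positivity : (0 : ℝ) < g)]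
      nlinarith [(by positivity : (0 : ℝ) < g)]
    have := abs_sub_le (n * g) x (V * g)
    rw [abs_sub_comm (n * g) x] at this
    linarith
  · rcases hbinade with rfl | hbinade
    · exact absurd hc (lt_irrefl _)
    · linarith [le_abs_self (x - y), le_abs_self y]

theorem IsRNE.eq_of_near {rnd : ℝ → ℝ} (hrnd : IsRNE (FF p emin emax) (evenFF p emin emax) rnd)
    {x : ℝ} {V c : ℤ} (hV : |V| < 2 ^ p) (hc : emin ≤ c) (hc' : c ≤ emax)
    (hnear : 2 * |x - V * 2 ^ (c + 1 - (p : ℤ))| < 2 ^ (c + 1 - (p : ℤ)))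
    (hbinade : c = emin ∨ 2 ^ c + |x - V * 2 ^ (c + 1 - (p : ℤ))| ≤ x) :
    rnd x = V * 2 ^ (c + 1 - (p : ℤ)) :=
  hrnd.eq_of_forall_lt ⟨V, c, hV, hc, hc', rfl⟩ (abs_sub_lt_abs_sub_of_near hnear hbinade)

theorem IsRNE.div_eq_of_near {rnd : ℝ → ℝ}
    (hrnd : IsRNE (FF p emin emax) (evenFF p emin emax) rnd)
    {r f : ℝ} {V c : ℤ} (hf : 0 < f) (hV : |V| < 2 ^ p) (hc : emin ≤ c) (hc' : c ≤ emax)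
    (hnear : 2 * |r - V * 2 ^ (c + 1 - (p : ℤ)) * f| < 2 ^ (c + 1 - (p : ℤ)) * f)
    (hbinade : c = emin ∨ 2 ^ c * f + |r - V * 2 ^ (c + 1 - (p : ℤ)) * f| ≤ r) :
    rnd (r / f) = V * 2 ^ (c + 1 - (p : ℤ)) := by
  have hdiv : ∀ v : ℝ, |r / f - v| = |r - v * f| / f := fun v => by
    rw [show r / f - v = (r - v * f) / f by field_simp, abs_div, abs_of_pos hf]
  refine hrnd.eq_of_near hV hc hc' ?_ ?_
  · rw [hdiv, mul_div_assoc', div_lt_iff₀ hf]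
    exact hnear
  · refine hbinade.imp_right fun h => ?_
    rw [hdiv, ← sub_nonneg,
      show r / f - (2 ^ c + |r - V * 2 ^ (c + 1 - (p : ℤ)) * f| / f)
        = (r - (2 ^ c * f + |r - V * 2 ^ (c + 1 - (p : ℤ)) * f|)) / f by field_simp]
    exact div_nonneg (by linarith) hf.le

theorem abs_sub_lt_abs_sub_of_midpoint {x : ℝ} {V : ℤ}
    (hx : 2 * x = (2 * V - 1) * 2 ^ (emin + 1 - (p : ℤ))) :
    ∀ y ∈ FF p emin emax, y ≠ ((V - 1 : ℤ) : ℝ) * 2 ^ (emin + 1 - (p : ℤ)) →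
      y ≠ V * 2 ^ (emin + 1 - (p : ℤ)) →
      |x - V * 2 ^ (emin + 1 - (p : ℤ))| < |x - y| := by
  intro y hy hne hne'
  set g : ℝ := 2 ^ (emin + 1 - (p : ℤ))
  have hg : 0 < g := by positivity
  have hdist : ∀ n : ℤ, 2 * |x - n * g| = |((2 * V - 1 - 2 * n : ℤ) : ℝ)| * g := fun n => by
    rw [← abs_of_pos hg, ← abs_mul, ← abs_two, ← abs_mul, abs_of_pos hg]
    congr 1
    push_cast
    linarith
  obtain ⟨n, rfl⟩ | ⟨h, -⟩ := exists_eq_int_mul_or_abs_lt_of_mem_FF hy emin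
  · have hn : (3 : ℝ) ≤ |((2 * V - 1 - 2 * n : ℤ) : ℝ)| := by
      have : n ≠ V - 1 := by rintro rfl; exact hne rfl
      have : n ≠ V := by rintro rfl; exact hne' rfl
      rw [← Int.cast_abs]
      exact_mod_cast (show (3 : ℤ) ≤ |2 * V - 1 - 2 * n| by rw [abs_eq_max_neg]; omega)
    have h1 := hdist n
    have h2 := hdist V
    rw [show 2 * V - 1 - 2 * V = (-1 : ℤ) by ring] at h2
    norm_num at h2
    nlinarith
  · exact absurd h (lt_irrefl _)

theorem not_evenFF_of_odd {V : ℤ} (hV : Odd V) :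
    ¬ evenFF p emin emax (V * 2 ^ (emin + 1 - (p : ℤ))) := by
  rintro ⟨m, e, -, he, -, hVm, hm, -⟩
  lift e - emin to ℕ using (by omega) with d hd
  have : V = m * 2 ^ d := by
    have h2 : (2 : ℝ) ^ (e + 1 - (p : ℤ)) = 2 ^ d * 2 ^ (emin + 1 - (p : ℤ)) := by
      rw [← zpow_natCast, ← zpow_add₀ two_ne_zero]; congr 1; omega
    rw [h2, ← mul_assoc] at hVm
    exact_mod_cast mul_right_cancel₀ (by positivity) hVm
  exact Int.not_even_iff_odd.mpr hV (this ▸ (even_iff_two_dvd.mpr hm).mul_right _)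

end Nearest

section Fmax

variable {p : ℕ}

theorem two_zpow_eq_pow_mul_zpow {a b : ℤ} (n : ℕ) (h : a = n + b) :
    (2 : ℝ) ^ a = 2 ^ n * 2 ^ b := by
  rw [h, zpow_add₀ two_ne_zero, zpow_natCast]

theorem fmax_eq (emax : ℤ) : fmax p emax = (2 ^ p - 1) * 2 ^ (emax + 1 - (p : ℤ)) := by
  have h : (2 : ℝ) ^ p * 2 ^ (1 - (p : ℤ)) = 2 := by
    rw [← two_zpow_eq_pow_mul_zpow (a := 1) p (by ring), zpow_one]
  rw [fmax, show emax + 1 - (p : ℤ) = (1 - p) + emax by ring, zpow_add₀ two_ne_zero]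
  linear_combination -(2 : ℝ) ^ emax * h

theorem zpow_mul_two_pow (n : ℕ) : (2 : ℝ) ^ ((n : ℤ) + 1 - p) * 2 ^ p = 2 ^ (n + 1) := by
  rw [← zpow_natCast, ← zpow_natCast, ← zpow_add₀ two_ne_zero]; congr 1; push_cast; ring

theorem zpow_mul_fmax (a emax : ℤ) :
    2 ^ a * fmax p emax = (2 ^ p - 1) * 2 ^ (a + emax + 1 - (p : ℤ)) := by
  rw [fmax_eq, show a + emax + 1 - (p : ℤ) = a + (emax + 1 - p) by ring, zpow_add₀ two_ne_zero]
  ring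

theorem one_lt_fmax {emax : ℤ} (hp : 2 ≤ p) (hemax : 0 ≤ emax) : 1 < fmax p emax := by
  have h1 : (2 : ℝ) ^ (1 - (p : ℤ)) ≤ 2 ^ (-1 : ℤ) := zpow_le_zpow_right₀ one_le_two (by omega)
  have h2 : (1 : ℝ) ≤ 2 ^ emax := one_le_zpow₀ one_le_two hemax
  rw [zpow_neg_one] at h1
  unfold fmax
  nlinarith

theorem two_pow_mul_fmax_mem_FF {emin emax : ℤ} {k : ℕ} {e : ℤ}
    (hc : emin ≤ k + e + emax + 1 - p) (hz : (2 : ℝ) ^ k * 2 ^ (e + 1 - (p : ℤ)) ≤ 1) :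
    (2 : ℝ) ^ k * 2 ^ (e + 1 - (p : ℤ)) * fmax p emax ∈ FF p emin emax := by
  rw [← two_zpow_eq_pow_mul_zpow (a := k + (e + 1 - p)) k rfl] at hz ⊢
  have hc' := (zpow_le_one_iff_right₀ one_lt_two).mp hz
  refine ⟨2 ^ p - 1, k + e + emax + 1 - p, ?_, hc, by omega, ?_⟩
  · rw [abs_of_nonneg (by linarith [one_le_pow₀ (one_le_two : (1 : ℤ) ≤ 2) (n := p)])]
    omega
  · rw [zpow_mul_fmax]
    push_cast
    ring_nf

end Fmax

section MulDivFmax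

variable {p : ℕ} {emin : ℤ} {emax : ℕ} {rnd : ℝ → ℝ}

theorem rnd_mul_fmax_of_two_pow_lt (hrnd : IsRNE (FF p emin emax) (evenFF p emin emax) rnd)
    {m e : ℤ} {k : ℕ} (hk : 2 ^ k < m) (hk' : m < 2 ^ (k + 1)) (hkp : k < p)
    (hc : emin ≤ e + emax + k + 2 - p) (hz : (m : ℝ) * 2 ^ (e + 1 - (p : ℤ)) ≤ 1) :
    rnd (m * 2 ^ (e + 1 - (p : ℤ)) * fmax p emax) =
      (m * 2 ^ p - 2 ^ (k + 1)) * 2 ^ (e + emax + 2 - 2 * (p : ℤ)) := by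
  obtain ⟨u, hu_def⟩ : ∃ u : ℝ, u = 2 ^ (e + emax + 2 - 2 * (p : ℤ)) := ⟨_, rfl⟩
  have hu : 0 < u := hu_def ▸ zpow_pos two_pos _
  have hx : (m : ℝ) * 2 ^ (e + 1 - (p : ℤ)) * fmax p emax = m * (2 ^ p - 1) * u := by
    rw [mul_assoc, zpow_mul_fmax, hu_def]; ring_nf
  have hulp : (2 : ℝ) ^ ((e + emax + k + 2 - p) + 1 - (p : ℤ)) = 2 ^ (k + 1) * u :=
    hu_def ▸ two_zpow_eq_pow_mul_zpow _ (by push_cast; ring)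
  -- `z * fmax = (m * 2^p - m) * u` rounds down to the nearest multiple of `2^(k+1) * u`
  have hv : ((m * 2 ^ (p - (k + 1)) - 1 : ℤ) : ℝ) * 2 ^ ((e + emax + k + 2 - p) + 1 - (p : ℤ))
      = (m * 2 ^ p - 2 ^ (k + 1)) * u := by
    have : ((2 ^ (p - (k + 1)) * 2 ^ (k + 1) : ℤ) : ℝ) = 2 ^ p := by
      rw [← pow_add, Nat.sub_add_cancel hkp]; push_cast; rfl
    push_cast at this ⊢
    rw [hulp]
    linear_combination (m : ℝ) * u * this
  have hmk : (2 : ℝ) ^ k + 1 ≤ m := by exact_mod_cast hk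
  have hmk' : (m : ℝ) + 1 ≤ 2 ^ (k + 1) := by exact_mod_cast hk'
  have hk2 : (2 : ℝ) ^ (k + 1) = 2 * 2 ^ k := pow_succ' 2 k
  have hxv : (m : ℝ) * (2 ^ p - 1) * u - (m * 2 ^ p - 2 ^ (k + 1)) * u = (2 ^ (k + 1) - m) * u := by
    ring
  have hxv_pos : 0 < (2 ^ (k + 1) - (m : ℝ)) * u := mul_pos (by linarith) hu
  rw [← hu_def, ← hv]
  refine hrnd.eq_of_near ?_ hc ?_ ?_ (Or.inr ?_)
  · have hD : (0 : ℤ) < 2 ^ (p - (k + 1)) := by positivity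
    have h1 : m * 2 ^ (p - (k + 1)) ≤ (2 ^ (k + 1) - 1) * 2 ^ (p - (k + 1)) :=
      mul_le_mul_of_nonneg_right (by omega) hD.le
    have h2 : 0 < m * 2 ^ (p - (k + 1)) := mul_pos ((pow_pos two_pos k).trans hk) hD
    have h3 : (2 : ℤ) ^ (p - (k + 1)) * 2 ^ (k + 1) = 2 ^ p := by
      rw [← pow_add, Nat.sub_add_cancel hkp]
    rw [abs_lt]
    constructor <;> linarith
  · have : (2 : ℝ) ^ ((k : ℤ) + (e + 1 - p)) < 1 := by
      rw [zpow_add₀ two_ne_zero, zpow_natCast]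
      nlinarith [zpow_pos (two_pos : (0 : ℝ) < 2) (e + 1 - (p : ℤ))]
    have := (zpow_lt_one_iff_right₀ one_lt_two).mp this
    omega
  · rw [hv, hx, hulp, hxv, abs_of_pos hxv_pos]
    nlinarith
  · have hbin : (2 : ℝ) ^ (e + emax + k + 2 - (p : ℤ)) = 2 ^ k * 2 ^ p * u := by
      rw [hu_def, ← pow_add]; exact two_zpow_eq_pow_mul_zpow _ (by push_cast; ring)
    have hkp' : (2 : ℝ) ^ (k + 1) ≤ 2 ^ p := pow_le_pow_right₀ one_le_two hkp
    rw [hv, hx, hbin, hxv, abs_of_pos hxv_pos]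
    nlinarith [mul_le_mul_of_nonneg_right hmk (by positivity : (0 : ℝ) ≤ 2 ^ p)]

theorem rnd_div_fmax_of_two_pow_lt (hrnd : IsRNE (FF p emin emax) (evenFF p emin emax) rnd)
    (hp : 2 ≤ p) {m e : ℤ} {k : ℕ} (hk : 2 ^ k < m) (hk' : m < 2 ^ (k + 1)) (hkp : k < p)
    (he : emin ≤ e) (he' : e ≤ emax) (hcan : e = emin ∨ k + 1 = p) :
    rnd ((m * 2 ^ p - 2 ^ (k + 1)) * 2 ^ (e + emax + 2 - 2 * (p : ℤ)) / fmax p emax) =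
      m * 2 ^ (e + 1 - (p : ℤ)) := by
  obtain ⟨u, hu_def⟩ : ∃ u : ℝ, u = 2 ^ (e + emax + 2 - 2 * (p : ℤ)) := ⟨_, rfl⟩
  have hu : 0 < u := hu_def ▸ zpow_pos two_pos _
  have hg : (2 : ℝ) ^ (e + 1 - (p : ℤ)) * fmax p emax = (2 ^ p - 1) * u := by
    rw [zpow_mul_fmax, hu_def]; ring_nf
  have hmk : (2 : ℝ) ^ k + 1 ≤ m := by exact_mod_cast hk
  have hmk' : (m : ℝ) + 1 ≤ 2 ^ (k + 1) := by exact_mod_cast hk'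
  have hkp' : (2 : ℝ) ^ (k + 1) ≤ 2 ^ p := pow_le_pow_right₀ one_le_two hkp
  have hk2 : (2 : ℝ) ^ (k + 1) = 2 * 2 ^ k := pow_succ' 2 k
  have hdist : |(m * 2 ^ p - 2 ^ (k + 1)) * u - m * 2 ^ (e + 1 - (p : ℤ)) * fmax p emax|
      = (2 ^ (k + 1) - m) * u := by
    rw [mul_assoc, hg, show ((m : ℝ) * 2 ^ p - 2 ^ (k + 1)) * u - m * ((2 ^ p - 1) * u)
      = -((2 ^ (k + 1) - m) * u) by ring, abs_neg, abs_of_pos (mul_pos (by linarith) hu)]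
  rw [← hu_def]
  refine hrnd.div_eq_of_near (one_pos.trans (one_lt_fmax hp (Nat.cast_nonneg _))) ?_ he he' ?_ ?_
  · have : (2 : ℤ) ^ (k + 1) ≤ 2 ^ p := pow_le_pow_right₀ one_le_two hkp
    rw [abs_lt]; constructor <;> linarith [pow_pos (two_pos : (0 : ℤ) < 2) k]
  · rw [hdist, hg]
    nlinarith
  · refine hcan.imp_right fun hkp => ?_
    have hbin : (2 : ℝ) ^ e * fmax p emax = 2 ^ k * ((2 ^ p - 1) * u) := by
      rw [← hg, ← mul_assoc, ← two_zpow_eq_pow_mul_zpow (a := e) k (by omega)]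
    have hp2 : (2 : ℝ) ^ p = 2 * 2 ^ k := by rw [← hkp, pow_succ']
    rw [hdist, hbin, hp2, hk2]
    nlinarith [mul_nonneg (mul_nonneg (by linarith : (0 : ℝ) ≤ m - 2 ^ k - 1)
      (by positivity : (0 : ℝ) ≤ 2 * 2 ^ k + 1)) hu.le]

theorem rnd_rnd_fmax_of_mul_lt (hrnd : IsRNE (FF p emin emax) (evenFF p emin emax) rnd)
    (hp : 2 ≤ p) (he : emin ≤ emax) {m : ℤ} (hm : 0 < m) (hlow : m * 2 ^ (emax + 2) < 2 ^ p) :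
    rnd (rnd (m * 2 ^ (emin + 1 - (p : ℤ)) * fmax p emax) / fmax p emax) =
      m * 2 ^ (emin + 1 - (p : ℤ)) := by
  obtain ⟨t, ht_def⟩ : ∃ t : ℝ, t = 2 ^ ((emax : ℤ) + 1 - p) := ⟨_, rfl⟩
  have ht : t * 2 ^ p = 2 ^ (emax + 1) := ht_def ▸ zpow_mul_two_pow emax
  have hf : fmax p emax = (2 ^ p - 1) * t := ht_def ▸ fmax_eq _
  set g : ℝ := 2 ^ (emin + 1 - (p : ℤ))
  have hg : 0 < g := by positivity
  have htpos : 0 < t := ht_def ▸ zpow_pos two_pos _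
  have hmR : (0 : ℝ) < m := by exact_mod_cast hm
  have hpow : (2 : ℤ) ^ (emax + 2) = 2 * 2 ^ (emax + 1) := pow_succ' 2 (emax + 1)
  rw [hpow] at hlow
  have h2 : (2 : ℤ) ≤ 2 ^ (emax + 1) := le_self_pow₀ one_le_two (Nat.succ_ne_zero _)
  have hV : m * 2 ^ (emax + 1) < 2 ^ p := by
    linarith [mul_pos hm (pow_pos (two_pos : (0 : ℤ) < 2) (emax + 1))]
  have h2mt : 2 * m * t < 1 := by
    have hlowR : (m : ℝ) * (2 * 2 ^ (emax + 1)) < 2 ^ p := by exact_mod_cast hlow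
    nlinarith [(by positivity : (0 : ℝ) < 2 ^ p)]
  have hdist : |(m : ℝ) * g * fmax p emax - m * 2 ^ (emax + 1) * g| = m * t * g := by
    rw [hf, ← ht, show (m : ℝ) * g * ((2 ^ p - 1) * t) - m * (t * 2 ^ p) * g = -(m * t * g) by ring,
      abs_neg, abs_of_pos (by positivity)]
  have hr : rnd (m * g * fmax p emax) = ((m * 2 ^ (emax + 1) : ℤ) : ℝ) * g := by
    refine hrnd.eq_of_near ?_ le_rfl he ?_ (Or.inl rfl)
    · rwa [abs_of_pos (by positivity)]
    · push_cast
      rw [hdist]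
      nlinarith
  rw [hr]
  refine hrnd.div_eq_of_near (one_pos.trans (one_lt_fmax hp (Nat.cast_nonneg _)))
    (by rw [abs_of_pos hm]; nlinarith) le_rfl he ?_ (Or.inl rfl)
  have h2m : 2 * (m : ℝ) < 2 ^ p - 1 := by
    have : 2 * m < (2 : ℤ) ^ p - 1 := by nlinarith
    exact_mod_cast this
  push_cast
  rw [abs_sub_comm, hdist, hf]
  nlinarith [mul_lt_mul_of_pos_right h2m (mul_pos hg htpos)]

theorem rnd_rnd_fmax_of_mul_eq (hrnd : IsRNE (FF p emin emax) (evenFF p emin emax) rnd)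
    (hp : 2 ≤ p) (he : emin ≤ emax) {m : ℤ} (htie : m * 2 ^ (emax + 2) = 2 ^ p) :
    rnd (rnd (m * 2 ^ (emin + 1 - (p : ℤ)) * fmax p emax) / fmax p emax) =
      m * 2 ^ (emin + 1 - (p : ℤ)) := by
  obtain ⟨t, ht_def⟩ : ∃ t : ℝ, t = 2 ^ ((emax : ℤ) + 1 - p) := ⟨_, rfl⟩
  have ht : t * 2 ^ p = 2 ^ (emax + 1) := ht_def ▸ zpow_mul_two_pow emax
  have hf : fmax p emax = (2 ^ p - 1) * t := ht_def ▸ fmax_eq _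
  have hf1 : 1 < fmax p emax := one_lt_fmax hp (Nat.cast_nonneg _)
  set g : ℝ := 2 ^ (emin + 1 - (p : ℤ))
  have hg : 0 < g := by positivity
  have hP : (2 : ℤ) ^ p = 2 * 2 ^ (p - 1) := by rw [← pow_succ', Nat.sub_add_cancel (by omega)]
  have h4 : (4 : ℤ) ≤ 2 ^ (emax + 2) := by
    calc (4 : ℤ) = 2 ^ 2 := by norm_num
      _ ≤ 2 ^ (emax + 2) := pow_le_pow_right₀ one_le_two (by omega)
  have hm : 0 < m := pos_of_mul_pos_left (htie ▸ pow_pos two_pos p) (by positivity)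
  have hV : (0 : ℤ) < 2 ^ (p - 1) := by positivity
  -- `z * fmax` is the midpoint between the floats `(2^(p-1) - 1) * g` and `2^(p-1) * g`
  have hx : 2 * (m * g * fmax p emax) = (2 * ((2 ^ (p - 1) : ℤ) : ℝ) - 1) * g := by
    have hmt : 2 * m * t = 1 := by
      have htieR : (m : ℝ) * (2 * 2 ^ (emax + 1)) = 2 ^ p := by
        rw [← pow_succ']; exact_mod_cast htie
      have : (2 * m * t - 1) * 2 ^ p = 0 := by linear_combination (2 * (m : ℝ)) * ht + htieR
      simpa [sub_eq_zero] using this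
    have hPR : (2 : ℝ) ^ p = 2 * ((2 ^ (p - 1) : ℤ) : ℝ) := by exact_mod_cast hP
    rw [hf, ← hPR]
    linear_combination ((2 : ℝ) ^ p - 1) * g * hmt
  have hr : rnd (m * g * fmax p emax) = ((2 ^ (p - 1) : ℤ) : ℝ) * g := by
    refine hrnd.eq_of_tie (a := ((2 ^ (p - 1) - 1 : ℤ) : ℝ) * g)
      ⟨_, emin, by rw [abs_of_pos hV]; omega, le_rfl, he, rfl⟩
      ⟨_, emin, by rw [abs_of_nonneg (by omega)]; omega, le_rfl, he, rfl⟩ ?_ ?_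
      (not_evenFF_of_odd ((even_two.pow_of_ne_zero (by omega)).sub_odd odd_one))
      (abs_sub_lt_abs_sub_of_midpoint hx)
    · intro h
      have := mul_right_cancel₀ hg.ne' h
      push_cast at this
      linarith
    · rw [show (m : ℝ) * g * fmax p emax - ((2 ^ (p - 1) - 1 : ℤ) : ℝ) * g = g / 2 by
          push_cast at hx ⊢; linarith,
        show (m : ℝ) * g * fmax p emax - ((2 ^ (p - 1) : ℤ) : ℝ) * g = -(g / 2) by linarith,
        abs_neg]
  rw [hr]
  refine hrnd.div_eq_of_near (one_pos.trans hf1) (by rw [abs_of_pos hm]; nlinarith) le_rfl he ?_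
    (Or.inl rfl)
  rw [show ((2 ^ (p - 1) : ℤ) : ℝ) * g - m * g * fmax p emax = g / 2 by linarith,
    abs_of_pos (half_pos hg)]
  nlinarith

theorem rnd_rnd_fmax_of_lt_mul (hrnd : IsRNE (FF p emin emax) (evenFF p emin emax) rnd)
    (hp : 2 ≤ p) {m e : ℤ} {k : ℕ} (hk : 2 ^ k ≤ m) (hk' : m < 2 ^ (k + 1)) (hm : m < 2 ^ p)
    (he : emin ≤ e) (he' : e ≤ emax) (hz : (m : ℝ) * 2 ^ (e + 1 - (p : ℤ)) ≤ 1)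
    (hcan : 2 ^ (p - 1) ≤ m ∨ e = emin) (hhigh : 2 ^ p < m * 2 ^ (emax + 2)) :
    rnd (rnd (m * 2 ^ (e + 1 - (p : ℤ)) * fmax p emax) / fmax p emax) =
      m * 2 ^ (e + 1 - (p : ℤ)) := by
  have hkp : k < p := (pow_lt_pow_iff_right₀ one_lt_two).mp (hk.trans_lt hm)
  rcases hk.eq_or_lt with hpow | hk
  · have hc : p < k + (emax + 2) := by
      refine (pow_lt_pow_iff_right₀ (one_lt_two : (1 : ℤ) < 2)).mp ?_
      rwa [pow_add, hpow]
    have hf : fmax p emax ≠ 0 := (one_pos.trans (one_lt_fmax hp (Nat.cast_nonneg _))).ne'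
    have hzF : (m : ℝ) * 2 ^ (e + 1 - (p : ℤ)) ∈ FF p emin emax :=
      ⟨m, e, by rwa [abs_of_pos (hpow ▸ pow_pos two_pos k)], he, he', rfl⟩
    rw [← hpow] at hz hzF ⊢
    push_cast at hz hzF ⊢
    exact hrnd.rnd_div_rnd_mul_of_mem hzF (two_pow_mul_fmax_mem_FF (by omega) hz) hf
  · have hc : p < k + 1 + (emax + 2) := by
      refine (pow_lt_pow_iff_right₀ (one_lt_two : (1 : ℤ) < 2)).mp ?_
      rw [pow_add]
      exact hhigh.trans (by gcongr)
    rw [rnd_mul_fmax_of_two_pow_lt hrnd hk hk' hkp (by omega) hz]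
    refine rnd_div_fmax_of_two_pow_lt hrnd hp hk hk' hkp he he' (hcan.symm.imp_right fun hn => ?_)
    have := (pow_lt_pow_iff_right₀ (one_lt_two : (1 : ℤ) < 2)).mp (hn.trans_lt hk')
    omega

theorem rnd_rnd_fmax_of_pos (hrnd : IsRNE (FF p emin emax) (evenFF p emin emax) rnd)
    (hp : 2 ≤ p) {z : ℝ} (hz : z ∈ FF p emin emax) (hz0 : 0 < z) (hz1 : z ≤ 1) :
    rnd (rnd (z * fmax p emax) / fmax p emax) = z := by
  obtain ⟨m, e, hm, he, he', rfl, hcan⟩ := exists_canonical_of_mem_FF hz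
  have hm0 : 0 < m := by
    have : (0 : ℝ) < m := pos_of_mul_pos_left hz0 (zpow_pos two_pos _).le
    exact_mod_cast this
  rw [abs_of_pos hm0] at hm hcan
  obtain ⟨k, hk, hk'⟩ := exists_nat_pow_near (show (1 : ℤ) ≤ m by omega) one_lt_two
  -- a normal significand `m ≥ 2^(p-1)` makes `m * 2^(emax+2)` exceed `2^p`
  have hsub : m * 2 ^ (emax + 2) ≤ 2 ^ p → e = emin := fun h => hcan.resolve_left fun hn => by
    have hP : (2 : ℤ) ^ p = 2 * 2 ^ (p - 1) := by
      rw [← pow_succ', Nat.sub_add_cancel (by omega)]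
    have h4 : (2 : ℤ) ^ 2 ≤ 2 ^ (emax + 2) := pow_le_pow_right₀ one_le_two (by omega)
    nlinarith [pow_pos (two_pos : (0 : ℤ) < 2) (p - 1)]
  rcases lt_trichotomy (m * 2 ^ (emax + 2)) (2 ^ p) with hlow | htie | hhigh
  · obtain rfl := hsub hlow.le
    exact rnd_rnd_fmax_of_mul_lt hrnd hp he' hm0 hlow
  · obtain rfl := hsub htie.le
    exact rnd_rnd_fmax_of_mul_eq hrnd hp he' htie
  · exact rnd_rnd_fmax_of_lt_mul hrnd hp hk hk' hm he he' hz1 hcan hhigh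

end MulDivFmax

theorem mul_div_fmax_general (p : ℕ) (hp : 2 ≤ p) (emin emax : ℤ)
    (hemax : 0 ≤ emax)
    (rnd : ℝ → ℝ)
    (hrnd : IsRNE (FF p emin emax) (evenFF p emin emax) rnd) :
    ∀ z ∈ FF p emin emax, |z| ≤ 1 →
      rnd (rnd (z * fmax p emax) / fmax p emax) = z := by
  lift emax to ℕ using hemax
  intro z hz hz1
  rcases lt_trichotomy z 0 with hneg | rfl | hpos
  · have := rnd_rnd_fmax_of_pos (hrnd.neg (fun _ => neg_mem_FF) (fun _ => evenFF_neg)) hp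
      (neg_mem_FF hz) (neg_pos.mpr hneg) (by rwa [abs_of_neg hneg] at hz1)
    simpa [neg_div] using this
  · have hf : fmax p emax ≠ 0 := (one_pos.trans (one_lt_fmax hp (Nat.cast_nonneg _))).ne'
    exact hrnd.rnd_div_rnd_mul_of_mem hz (by rwa [zero_mul]) hf
  · exact rnd_rnd_fmax_of_pos hrnd hp hz hpos (le_of_abs_le hz1)

/-- For every float `z` with `|z| ≤ 1`, `(z ⊗ f_max) ⊘ f_max = z`. -/
theorem mul_div_fmax (p : ℕ) (hp : 2 ≤ p) (emin emax : ℤ)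
    (hemin : emin ≤ 0) (hemax : 0 ≤ emax)
    (rnd : ℝ → ℝ)
    (hrnd : IsRNE (FF p emin emax) (evenFF p emin emax) rnd) :
    ∀ z ∈ FF p emin emax, |z| ≤ 1 →
      rnd (rnd (z * fmax p emax) / fmax p emax) = z :=
  mul_div_fmax_general p hp emin emax hemax rnd hrnd
end

section
/- In IEEE 754 binary arithmetic with round-to-nearest ties-to-even, |z| ⊗ f_max ≤ f_max if and only if |z| ≤ 1. In particular, for z = 1 + 2^{1−p} (the successor of 1), z ⊗ f_max = +∞. -/
open scoped Classical

/-- Round-to-nearest ties-to-even with overflow to `±∞`, modelled in `EReal`: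
values of magnitude at least `f_max + 2^(emax-p)` round to the infinity of the
corresponding sign; other values round to the nearest finite float
(ties-to-even). -/
def IsRNEx (p : ℕ) (emin emax : ℤ) (rnd : ℝ → EReal) : Prop :=
  ∀ x : ℝ,
    (fmax p emax + (2 : ℝ) ^ (emax - (p : ℤ)) ≤ x → rnd x = ⊤) ∧
    (x ≤ -(fmax p emax + (2 : ℝ) ^ (emax - (p : ℤ))) → rnd x = ⊥) ∧
    (|x| < fmax p emax + (2 : ℝ) ^ (emax - (p : ℤ)) →
      ∃ z ∈ FF p emin emax, rnd x = (z : EReal) ∧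
        (∀ y ∈ FF p emin emax, |x - z| ≤ |x - y|) ∧
        (∀ y ∈ FF p emin emax, y ≠ z → |x - z| = |x - y| → evenFF p emin emax z))

/-!
Beyond `1` every float is an integer multiple of `ulp 1 = 2^(1-p)`, so a float of magnitude
greater than `1` has magnitude at least `1 + 2^(1-p)`. Multiplying `f_max` by that already
reaches the overflow threshold `f_max + 2^(emax-p)` (half an ulp above `f_max`), because
`2^(1-p) · f_max ≥ 2^(emax-p)`. Conversely, for `|z| ≤ 1` the product lies in `[0, f_max]`,
below the threshold, and rounding to nearest lands on a finite float, hence at most `f_max`.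
-/

lemma fmax_eq_mul_two_zpow (p : ℕ) (emax : ℤ) :
    fmax p emax = ((2 : ℝ) ^ p - 1) * (2 : ℝ) ^ (emax + 1 - (p : ℤ)) := by
  have hsplit : (2 : ℝ) ^ (emax + 1 - (p : ℤ)) = 2 ^ (1 - (p : ℤ)) * 2 ^ emax := by
    rw [← zpow_add₀ two_ne_zero]; ring_nf
  have hcancel : (2 : ℝ) ^ p * 2 ^ (1 - (p : ℤ)) = 2 := by
    rw [← zpow_natCast, ← zpow_add₀ two_ne_zero]; ring_nf; exact zpow_one 2
  rw [fmax, hsplit]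
  linear_combination -(2 : ℝ) ^ emax * hcancel

lemma fmax_pos {p : ℕ} (hp : 1 ≤ p) (emax : ℤ) : 0 < fmax p emax := by
  have hulp : (2 : ℝ) ^ (1 - (p : ℤ)) ≤ 1 := zpow_le_one_of_nonpos₀ one_le_two (by omega)
  exact mul_pos (by linarith) (zpow_pos two_pos _)

lemma abs_le_fmax_of_mem_FF {p : ℕ} {emin emax : ℤ} {y : ℝ} (hy : y ∈ FF p emin emax) :
    |y| ≤ fmax p emax := by
  obtain ⟨m, e, hm, -, he, rfl⟩ := hy
  have hm' : |(m : ℝ)| ≤ (2 : ℝ) ^ p - 1 := by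
    rw [← Int.cast_abs]
    exact_mod_cast Int.le_sub_one_of_lt hm
  rw [fmax_eq_mul_two_zpow, abs_mul, abs_of_pos (zpow_pos (two_pos (α := ℝ)) (e + 1 - (p : ℤ)))]
  exact mul_le_mul hm' (zpow_le_zpow_right₀ one_le_two (by omega)) (zpow_pos two_pos _).le
    (hm'.trans' (abs_nonneg _))

lemma IsRNEx.le_fmax {p : ℕ} {emin emax : ℤ} {rnd : ℝ → EReal} (hrnd : IsRNEx p emin emax rnd)
    {x : ℝ} (hx : |x| < fmax p emax + (2 : ℝ) ^ (emax - (p : ℤ))) :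
    rnd x ≤ ((fmax p emax : ℝ) : EReal) := by
  obtain ⟨w, hw, hrw, -⟩ := (hrnd x).2.2 hx
  rw [hrw]
  exact EReal.coe_le_coe_iff.mpr ((le_abs_self w).trans (abs_le_fmax_of_mem_FF hw))

lemma one_add_le_int_mul_of_one_lt {u : ℝ} (hu : 0 < u) {N : ℤ} (hN : N * u = 1) {n : ℤ}
    (hn : 1 < n * u) : 1 + u ≤ n * u := by
  have hNn : N < n := by
    rw [← hN] at hn
    exact_mod_cast lt_of_mul_lt_mul_right hn hu.le
  calc 1 + u = ((N + 1 : ℤ) : ℝ) * u := by push_cast; linarith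
    _ ≤ n * u := mul_le_mul_of_nonneg_right (by exact_mod_cast hNn) hu.le

lemma exists_int_mul_ulp_one_of_one_lt_abs {p : ℕ} {emin emax : ℤ} {z : ℝ}
    (hz : z ∈ FF p emin emax) (h1 : 1 < |z|) :
    ∃ n : ℤ, |z| = n * (2 : ℝ) ^ (1 - (p : ℤ)) := by
  obtain ⟨m, e, hm, -, -, rfl⟩ := hz
  rw [abs_mul, abs_of_pos (zpow_pos (two_pos (α := ℝ)) (e + 1 - (p : ℤ))), ← Int.cast_abs] at h1 ⊢
  -- `|m| < 2^p` forces `|z| < 2^(e+1)`, so `e ≥ 0`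
  have he : 0 ≤ e := by
    by_contra! hneg
    have hbound : ((|m| : ℤ) : ℝ) * 2 ^ (e + 1 - (p : ℤ)) < 2 ^ (e + 1) := by
      calc ((|m| : ℤ) : ℝ) * 2 ^ (e + 1 - (p : ℤ)) < (2 : ℝ) ^ (p : ℤ) * 2 ^ (e + 1 - (p : ℤ)) :=
            mul_lt_mul_of_pos_right (by exact_mod_cast hm) (zpow_pos two_pos _)
        _ = 2 ^ (e + 1) := by rw [← zpow_add₀ two_ne_zero]; ring_nf
    linarith [zpow_le_one_of_nonpos₀ (one_le_two (α := ℝ)) (show e + 1 ≤ 0 by omega)]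
  refine ⟨|m| * 2 ^ e.toNat, ?_⟩
  push_cast
  rw [mul_assoc, ← zpow_natCast, ← zpow_add₀ two_ne_zero, Int.toNat_of_nonneg he]
  ring_nf

lemma one_add_ulp_le_abs_of_mem_FF {p : ℕ} (hp : 1 ≤ p) {emin emax : ℤ} {z : ℝ}
    (hz : z ∈ FF p emin emax) (h1 : 1 < |z|) : 1 + (2 : ℝ) ^ (1 - (p : ℤ)) ≤ |z| := by
  obtain ⟨n, hn⟩ := exists_int_mul_ulp_one_of_one_lt_abs hz h1
  have hN : ((2 ^ (p - 1) : ℤ) : ℝ) * (2 : ℝ) ^ (1 - (p : ℤ)) = 1 := by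
    push_cast
    rw [← zpow_natCast, ← zpow_add₀ two_ne_zero, Nat.cast_sub hp]; norm_num
  rw [hn] at h1 ⊢
  exact one_add_le_int_mul_of_one_lt (zpow_pos two_pos _) hN h1

lemma fmax_add_half_ulp_le {p : ℕ} (hp : 1 ≤ p) (emax : ℤ) :
    fmax p emax + (2 : ℝ) ^ (emax - (p : ℤ)) ≤ (1 + (2 : ℝ) ^ (1 - (p : ℤ))) * fmax p emax := by
  set ε : ℝ := 2 ^ (1 - (p : ℤ)) with hε
  have hε1 : ε ≤ 1 := zpow_le_one_of_nonpos₀ one_le_two (by omega)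
  have hhalf : (2 : ℝ) ^ (emax - (p : ℤ)) * 2 = ε * 2 ^ emax := by
    rw [hε, ← zpow_add₀ two_ne_zero, ← zpow_add_one₀ two_ne_zero]; ring_nf
  have hE : (0 : ℝ) < 2 ^ emax := zpow_pos two_pos _
  rw [fmax]
  nlinarith [mul_pos hE (zpow_pos two_pos (1 - (p : ℤ)) : (0 : ℝ) < ε)]

theorem mul_fmax_overflow_iff_general (p : ℕ) (hp : 2 ≤ p) (emin emax : ℤ)
    (rnd : ℝ → EReal) (hrnd : IsRNEx p emin emax rnd) :
    (∀ z ∈ FF p emin emax,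
      (rnd (|z| * fmax p emax) ≤ ((fmax p emax : ℝ) : EReal) ↔ |z| ≤ 1)) ∧
    rnd ((1 + (2 : ℝ) ^ (1 - (p : ℤ))) * fmax p emax) = ⊤ := by
  have hp1 : 1 ≤ p := by omega
  have hfmax := fmax_pos hp1 emax
  have hoverflow := fmax_add_half_ulp_le hp1 emax
  refine ⟨fun z hz => ⟨fun hle => ?_, fun hz1 => hrnd.le_fmax ?_⟩, (hrnd _).1 hoverflow⟩
  · by_contra! hz1
    have hgap := one_add_ulp_le_abs_of_mem_FF hp1 hz hz1
    rw [(hrnd _).1 (hoverflow.trans (mul_le_mul_of_nonneg_right hgap hfmax.le)), top_le_iff] at hle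
    exact EReal.coe_ne_top _ hle
  · rw [abs_of_nonneg (mul_nonneg (abs_nonneg z) hfmax.le)]
    nlinarith [zpow_pos (two_pos (α := ℝ)) (emax - (p : ℤ))]

/-- `|z| ⊗ f_max ≤ f_max` iff `|z| ≤ 1`; in particular for `z = 1 + 2^(1-p)`
(the successor of `1`), `z ⊗ f_max = +∞`. -/
theorem mul_fmax_overflow_iff (p : ℕ) (hp : 2 ≤ p) (emin emax : ℤ)
    (hemin : emin ≤ 0) (hemax : 1 ≤ emax)
    (rnd : ℝ → EReal) (hrnd : IsRNEx p emin emax rnd) :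
    (∀ z ∈ FF p emin emax,
      (rnd (|z| * fmax p emax) ≤ ((fmax p emax : ℝ) : EReal) ↔ |z| ≤ 1)) ∧
    rnd ((1 + (2 : ℝ) ^ (1 - (p : ℤ))) * fmax p emax) = ⊤ :=
  mul_fmax_overflow_iff_general p hp emin emax rnd hrnd
end
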